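/- Let S and H be real Hilbert spaces and j : S → H an injective continuous linear map with dense range, and let b : S × S × S → ℝ be a trilinear form satisfying |b(u,v,w)| ≤ c ‖j u‖_H^{1/2} ‖u‖_S^{1/2} ‖j v‖_H^{1/2} ‖v‖_S^{1/2} ‖w‖_S for all u, v, w ∈ S. Let I = (0,T) with 0 < T < ∞, and suppose u ∈ L²(I,S) with j ∘ u ∈ L^∞(I,H). Then the S'-valued function N(u), defined for a.e. t by N(u)(t)(w) = b(u(t), u(t), w), belongs to L²(I,S') and ‖N(u)‖_{L²(I,S')} ≤ c ‖j ∘ u‖_{L^∞(I,H)} ‖u‖_{L²(I,S)}. -/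

import Mathlib

open MeasureTheory Set
open scoped ENNReal NNReal

/-! Under the interpolation estimate `b (x, x, ·)` has dual norm at most `c ‖j x‖ ‖x‖`, so
`‖N(u)(t)‖_{S'} ≤ c ‖j (u t)‖_H ‖u t‖_S`; Hölder's inequality with exponents `∞` and `2` finishes. -/

section Holder

variable {α E F G : Type*} [MeasurableSpace α] {μ : Measure α}
  [NormedAddCommGroup E] [NormedAddCommGroup F] [NormedAddCommGroup G]

theorem memLp_and_eLpNorm_le_of_norm_le_mul_mul {p : ℝ≥0∞} {f : α → E} {g : α → F} {h : α → G}
    {c : ℝ≥0} (hf : AEStronglyMeasurable f μ) (hg : MemLp g ∞ μ) (hh : MemLp h p μ)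
    (hfgh : ∀ᵐ t ∂μ, ‖f t‖ ≤ c * ‖g t‖ * ‖h t‖) :
    MemLp f p μ ∧ eLpNorm f p μ ≤ c * eLpNorm g ∞ μ * eLpNorm h p μ := by
  have hle : eLpNorm f p μ ≤ c * eLpNorm g ∞ μ * eLpNorm h p μ := by
    calc eLpNorm f p μ ≤ eLpNorm (fun t => (c : ℝ) • (‖g t‖ * ‖h t‖)) p μ := by
          refine eLpNorm_mono_ae_real ?_
          simpa only [smul_eq_mul, mul_assoc] using hfgh
      _ = c * eLpNorm (fun t => ‖g t‖ * ‖h t‖) p μ := by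
          rw [← Pi.smul_def, eLpNorm_const_smul, Real.enorm_of_nonneg c.coe_nonneg,
            ENNReal.ofReal_coe_nnreal]
      _ ≤ c * (1 * eLpNorm g ∞ μ * eLpNorm h p μ) := by
          gcongr
          refine eLpNorm_le_eLpNorm_top_mul_eLpNorm p g hh.1 (fun a b => ‖a‖ * ‖b‖) 1 ?_
          filter_upwards with t
          simp [nnnorm_mul]
      _ = c * eLpNorm g ∞ μ * eLpNorm h p μ := by rw [one_mul, mul_assoc]
  exact ⟨⟨hf, hle.trans_lt (by finiteness [hg.2, hh.2])⟩, hle⟩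

end Holder

/-- The constant is `c⁺ = c.toNNReal`, the real counterpart of `ENNReal.ofReal c`: nothing forces
`c ≥ 0`, and for `c < 0` the estimate only says that `b` vanishes on the diagonal. -/
theorem norm_apply_self_self_le {E G : Type*} [NormedAddCommGroup E] [NormedSpace ℝ E]
    [NormedAddCommGroup G] (j : E → G) (b : E →L[ℝ] E →L[ℝ] E →L[ℝ] ℝ) (c : ℝ)
    (hb : ∀ x w : E, |b x x w| ≤
      c * ‖j x‖ ^ ((1:ℝ)/2) * ‖x‖ ^ ((1:ℝ)/2) * ‖j x‖ ^ ((1:ℝ)/2) * ‖x‖ ^ ((1:ℝ)/2) * ‖w‖)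
    (x : E) : ‖b x x‖ ≤ c.toNNReal * ‖j x‖ * ‖x‖ := by
  refine ContinuousLinearMap.opNorm_le_bound _ (by positivity) fun w => ?_
  have hsqrt : ∀ a : ℝ, 0 ≤ a → a ^ ((1:ℝ)/2) * a ^ ((1:ℝ)/2) = a := fun a ha => by
    rw [← Real.sqrt_eq_rpow, Real.mul_self_sqrt ha]
  calc ‖b x x w‖
      ≤ c * (‖j x‖ ^ ((1:ℝ)/2) * ‖j x‖ ^ ((1:ℝ)/2)) * (‖x‖ ^ ((1:ℝ)/2) * ‖x‖ ^ ((1:ℝ)/2)) * ‖w‖ :=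
        (hb x w).trans_eq (by ring)
    _ = c * ‖j x‖ * ‖x‖ * ‖w‖ := by rw [hsqrt _ (norm_nonneg _), hsqrt _ (norm_nonneg _)]
    _ ≤ c.toNNReal * ‖j x‖ * ‖x‖ * ‖w‖ := by
        gcongr
        exact Real.le_coe_toNNReal c

theorem nonlinear_term_L2_general {S H : Type*}
    [NormedAddCommGroup S] [InnerProductSpace ℝ S]
    [NormedAddCommGroup H] [InnerProductSpace ℝ H]
    (j : S →L[ℝ] H)
    (b : S →L[ℝ] S →L[ℝ] S →L[ℝ] ℝ) (c : ℝ)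
    (hb : ∀ u v w : S, |b u v w| ≤
      c * ‖j u‖ ^ ((1:ℝ)/2) * ‖u‖ ^ ((1:ℝ)/2) * ‖j v‖ ^ ((1:ℝ)/2) * ‖v‖ ^ ((1:ℝ)/2) * ‖w‖)
    (T : ℝ)
    (u : ℝ → S) (hu : MemLp u 2 (volume.restrict (Ioo 0 T)))
    (huInf : MemLp (fun t => j (u t)) ⊤ (volume.restrict (Ioo 0 T))) :
    MemLp (fun t => b (u t) (u t)) 2 (volume.restrict (Ioo 0 T)) ∧
    eLpNorm (fun t => b (u t) (u t)) 2 (volume.restrict (Ioo 0 T)) ≤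
      ENNReal.ofReal c * eLpNorm (fun t => j (u t)) ⊤ (volume.restrict (Ioo 0 T)) *
        eLpNorm u 2 (volume.restrict (Ioo 0 T)) :=
  memLp_and_eLpNorm_le_of_norm_le_mul_mul
    (b.aestronglyMeasurable_comp₂ hu.aestronglyMeasurable hu.aestronglyMeasurable) huInf hu
    (ae_of_all _ fun t => norm_apply_self_self_le j b c (fun x w => hb x x w) (u t))

/-- **The nonlinear term as an `L²` function with values in the dual.**
Let `S ↪ H` (via `j`, injective continuous with dense range) be real Hilbert spaces and `b`
a (continuous) trilinear form on `S` satisfying the interpolation estimate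
`|b (u,v,w)| ≤ c ‖j u‖^{1/2} ‖u‖^{1/2} ‖j v‖^{1/2} ‖v‖^{1/2} ‖w‖`.  If `u ∈ L²((0,T),S)` and
`j ∘ u ∈ L^∞((0,T),H)`, then the `S'`-valued function `N (u) (t) = b (u t, u t, ·)` belongs
to `L²((0,T),S')` with `‖N (u)‖_{L²} ≤ c ‖j ∘ u‖_{L^∞} ‖u‖_{L²}`. -/
theorem nonlinear_term_L2 {S H : Type*}
    [NormedAddCommGroup S] [InnerProductSpace ℝ S] [CompleteSpace S]
    [NormedAddCommGroup H] [InnerProductSpace ℝ H] [CompleteSpace H]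
    (j : S →L[ℝ] H) (hjinj : Function.Injective j) (hjd : DenseRange j)
    (b : S →L[ℝ] S →L[ℝ] S →L[ℝ] ℝ) (c : ℝ)
    (hb : ∀ u v w : S, |b u v w| ≤
      c * ‖j u‖ ^ ((1:ℝ)/2) * ‖u‖ ^ ((1:ℝ)/2) * ‖j v‖ ^ ((1:ℝ)/2) * ‖v‖ ^ ((1:ℝ)/2) * ‖w‖)
    (T : ℝ) (hT : 0 < T)
    (u : ℝ → S) (hu : MemLp u 2 (volume.restrict (Ioo 0 T)))
    (huInf : MemLp (fun t => j (u t)) ⊤ (volume.restrict (Ioo 0 T))) :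
    MemLp (fun t => b (u t) (u t)) 2 (volume.restrict (Ioo 0 T)) ∧
    eLpNorm (fun t => b (u t) (u t)) 2 (volume.restrict (Ioo 0 T)) ≤
      ENNReal.ofReal c * eLpNorm (fun t => j (u t)) ⊤ (volume.restrict (Ioo 0 T)) *
        eLpNorm u 2 (volume.restrict (Ioo 0 T)) :=
  nonlinear_term_L2_general j b c hb T u hu huInf
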